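/- Let m ≥ 2 be an integer and let β ∈ (2^{1/m}, 2). Then for every x ∈ (0, 1/(β-1)) and every positive integer k, N_{km}(x,β) ≤ (2^m - 1)^k. -/

import Mathlib

/-!
Two β-expansions of the same `x` that agree on their first `j` digits have tails (digits `j`
onwards) of equal value. When `β ^ m > 2`, a tail beginning with `m` zeros has value at most
`β⁻ᵐ / (β - 1)`, which is strictly less than `(1 - β⁻ᵐ) / (β - 1)`, the least value of a tail
beginning with `m` ones. So a word of `E_j(x,β)` cannot be extended within `E_{j+m}(x,β)` both by
`0^m` and by `1^m`: it has at most `2^m - 1` extensions, and `N_{km} ≤ (2^m - 1)^k` follows by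
induction on `k`.
-/

/-- The set `Σ_β(x)` of β-expansions of `x`: sequences `(ε_n)_{n ≥ 1}` of zeros and ones
with `Σ_{n=1}^∞ ε_n / β^n = x` (here indexed from 0, so digit `n` has weight `β^{-(n+1)}`). -/
def betaExpansions (β x : ℝ) : Set (ℕ → Bool) :=
  {ε | ∑' n : ℕ, (if ε n then (1 : ℝ) else 0) / β ^ (n + 1) = x}

/-- `E_k(x,β)`: the set of words of length `k` extendable to a β-expansion of `x`. -/
def prefixSet (β x : ℝ) (k : ℕ) : Set (Fin k → Bool) :=
  {w | ∃ ε ∈ betaExpansions β x, ∀ i : Fin k, ε i = w i}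

/-- `N_k(x,β)`: the number of `k`-prefixes of β-expansions of `x`. -/
noncomputable def Nk (β x : ℝ) (k : ℕ) : ℕ := (prefixSet β x k).ncard

open Finset

noncomputable def betaValue (β : ℝ) (ε : ℕ → Bool) : ℝ :=
  ∑' n : ℕ, (if ε n then (1 : ℝ) else 0) / β ^ (n + 1)

section BetaValue

variable {β x : ℝ} {m : ℕ}

theorem mem_betaExpansions {ε : ℕ → Bool} : ε ∈ betaExpansions β x ↔ betaValue β ε = x :=
  Iff.rfl

theorem summable_inv_pow_succ (hβ : 1 < β) : Summable fun n : ℕ => 1 / β ^ (n + 1) := by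
  simp only [one_div, ← inv_pow]
  exact (summable_nat_add_iff 1).2 <|
    summable_geometric_of_lt_one (by positivity) (inv_lt_one_of_one_lt₀ hβ)

theorem summable_betaValue (hβ : 1 < β) (ε : ℕ → Bool) :
    Summable fun n => (if ε n then (1 : ℝ) else 0) / β ^ (n + 1) :=
  (summable_inv_pow_succ hβ).of_nonneg_of_le (fun n => by positivity)
    fun n => by gcongr; split <;> norm_num

theorem betaValue_true (hβ : 1 < β) : betaValue β (fun _ => true) = (β - 1)⁻¹ := by
  have hr : β⁻¹ < 1 := inv_lt_one_of_one_lt₀ hβ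
  calc betaValue β (fun _ => true) = ∑' n : ℕ, β⁻¹ ^ n * β⁻¹ := by
        simp only [betaValue, if_true, one_div, inv_pow, pow_succ, mul_inv]
    _ = (β - 1)⁻¹ := by
        rw [tsum_mul_right, tsum_geometric_of_lt_one (by positivity) hr]
        field_simp

theorem betaValue_nonneg (hβ : 0 ≤ β) (ε : ℕ → Bool) : 0 ≤ betaValue β ε :=
  tsum_nonneg fun n => by positivity

theorem betaValue_le_betaValue_true (hβ : 1 < β) (ε : ℕ → Bool) :
    betaValue β ε ≤ betaValue β (fun _ => true) :=
  (summable_betaValue hβ ε).tsum_le_tsum (fun n => by gcongr; split <;> norm_num)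
    (summable_betaValue hβ _)

theorem betaValue_eq_sum_add_shift (hβ : 1 < β) (ε : ℕ → Bool) (j : ℕ) :
    betaValue β ε = ∑ i ∈ range j, (if ε i then (1 : ℝ) else 0) / β ^ (i + 1)
      + betaValue β (fun n => ε (n + j)) / β ^ j := by
  rw [betaValue, ← (summable_betaValue hβ ε).sum_add_tsum_nat_add j, betaValue,
    ← tsum_div_const]
  congr 1
  refine tsum_congr fun n => ?_
  rw [div_div, ← pow_add]
  ring_nf

theorem betaValue_shift_eq_of_eq (hβ : 1 < β) {ε ε' : ℕ → Bool}
    (h : betaValue β ε = betaValue β ε') {j : ℕ} (hagree : ∀ i < j, ε i = ε' i) :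
    betaValue β (fun n => ε (n + j)) = betaValue β (fun n => ε' (n + j)) := by
  rw [betaValue_eq_sum_add_shift hβ ε j, betaValue_eq_sum_add_shift hβ ε' j,
    sum_congr rfl fun i hi => by rw [hagree i (mem_range.1 hi)]] at h
  exact (div_left_inj' (by positivity)).1 (add_left_cancel h)

theorem betaValue_lt_of_block (hβ : 1 < β) (hβm : 2 < β ^ m) {δ δ' : ℕ → Bool}
    (hδ : ∀ i < m, δ i = false) (hδ' : ∀ i < m, δ' i = true) :
    betaValue β δ < betaValue β δ' := by
  set V := betaValue β (fun _ => true) with hV_def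
  have hV : 0 < V := by rw [hV_def, betaValue_true hβ]; exact inv_pos.2 (by linarith)
  have hpow : 0 < β ^ m := by positivity
  have hδ_le : betaValue β δ ≤ V / β ^ m := by
    rw [betaValue_eq_sum_add_shift hβ δ m,
      sum_eq_zero fun i hi => by simp [hδ i (mem_range.1 hi)], zero_add]
    gcongr
    exact betaValue_le_betaValue_true hβ _
  have hδ'_ge : V - V / β ^ m ≤ betaValue β δ' := by
    have hV_split : V = _ := betaValue_eq_sum_add_shift hβ (fun _ => true) m
    have hprefix : ∑ i ∈ range m, (if δ' i then (1 : ℝ) else 0) / β ^ (i + 1)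
        = ∑ i ∈ range m, (if true then (1 : ℝ) else 0) / β ^ (i + 1) :=
      sum_congr rfl fun i hi => by rw [hδ' i (mem_range.1 hi)]
    rw [betaValue_eq_sum_add_shift hβ δ' m, hprefix]
    have := div_nonneg (betaValue_nonneg (β := β) (by linarith) fun n => δ' (n + m)) hpow.le
    linarith
  have hgap : 2 * (V / β ^ m) < V := by
    rw [← mul_div_assoc, div_lt_iff₀ hpow]
    nlinarith
  linarith

end BetaValue

section Counting

variable {β x : ℝ} {m j : ℕ}

theorem castAdd_mem_prefixSet {w : Fin (j + m) → Bool} (hw : w ∈ prefixSet β x (j + m)) :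
    (fun i => w (Fin.castAdd m i)) ∈ prefixSet β x j := by
  obtain ⟨ε, hε, hεw⟩ := hw
  exact ⟨ε, hε, fun i => hεw (Fin.castAdd m i)⟩

theorem not_append_false_and_append_true_mem_prefixSet (hβ : 1 < β) (hβm : 2 < β ^ m)
    (u : Fin j → Bool) :
    ¬(Fin.append u (fun _ : Fin m => false) ∈ prefixSet β x (j + m) ∧
      Fin.append u (fun _ : Fin m => true) ∈ prefixSet β x (j + m)) := by
  rintro ⟨⟨ε, hε, hεw⟩, ⟨ε', hε', hε'w⟩⟩
  have hagree : ∀ i < j, ε i = ε' i := fun i hi => by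
    have h := hεw (Fin.castAdd m ⟨i, hi⟩)
    have h' := hε'w (Fin.castAdd m ⟨i, hi⟩)
    rw [Fin.append_left, Fin.val_castAdd] at h h'
    rw [h, h']
  have htail := betaValue_shift_eq_of_eq hβ
    ((mem_betaExpansions.1 hε).trans (mem_betaExpansions.1 hε').symm) hagree
  refine (betaValue_lt_of_block hβ hβm (fun i hi => ?_) (fun i hi => ?_)).ne htail
  · have h := hεw (Fin.natAdd j ⟨i, hi⟩)
    rwa [Fin.append_right, Fin.val_natAdd, add_comm] at h
  · have h := hε'w (Fin.natAdd j ⟨i, hi⟩)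
    rwa [Fin.append_right, Fin.val_natAdd, add_comm] at h

theorem Nk_eq_card (k : ℕ) [DecidablePred (· ∈ prefixSet β x k)] :
    Nk β x k = #{w | w ∈ prefixSet β x k} := by
  rw [Nk, ← Set.ncard_coe_finset, coe_filter_univ, Set.ofPred_mem_eq]

theorem Nk_add_le (hβ : 1 < β) (hβm : 2 < β ^ m) :
    Nk β x (j + m) ≤ Nk β x j * (2 ^ m - 1) := by
  classical
  rw [Nk_eq_card, Nk_eq_card, mul_comm]
  refine card_le_mul_card_image_of_maps_to (f := fun w i => w (Fin.castAdd m i))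
    (fun w hw => mem_filter.2 ⟨mem_univ _, castAdd_mem_prefixSet (mem_filter.1 hw).2⟩) _
    fun u _ => ?_
  obtain ⟨b, hb⟩ : ∃ b : Bool, Fin.append u (fun _ : Fin m => b) ∉ prefixSet β x (j + m) := by
    by_contra! h
    exact not_append_false_and_append_true_mem_prefixSet hβ hβm u ⟨h false, h true⟩
  calc _ ≤ #((univ.erase fun _ => b).image (Fin.append u)) := card_le_card fun w hw => ?_
    _ ≤ #(univ.erase fun _ : Fin m => b) := card_image_le
    _ = 2 ^ m - 1 := by
      rw [card_erase_of_mem (mem_univ _), card_univ, Fintype.card_fun, Fintype.card_bool,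
        Fintype.card_fin]
  obtain ⟨hw_mem, rfl⟩ := mem_filter.1 hw
  refine mem_image.2 ⟨fun i => w (Fin.natAdd j i), mem_erase.2 ⟨fun hsuffix => hb ?_, mem_univ _⟩,
    Fin.append_castAdd_natAdd⟩
  rw [← hsuffix, Fin.append_castAdd_natAdd]
  exact (mem_filter.1 hw_mem).2

end Counting

theorem two_lt_pow_of_rpow_one_div_lt {m : ℕ} (hm : m ≠ 0) {β : ℝ}
    (h : (2 : ℝ) ^ (1 / (m : ℝ)) < β) : 1 < β ∧ 2 < β ^ m := by
  have hm₀ : (0 : ℝ) < m := by exact_mod_cast Nat.pos_of_ne_zero hm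
  have h_one : 1 < (2 : ℝ) ^ (1 / (m : ℝ)) := Real.one_lt_rpow (by norm_num) (by positivity)
  have h_pow : ((2 : ℝ) ^ (1 / (m : ℝ))) ^ m = 2 := by
    rw [one_div, Real.rpow_inv_natCast_pow (by norm_num) hm]
  exact ⟨h_one.trans h, h_pow ▸ pow_lt_pow_left₀ h (by positivity) hm⟩

theorem Nk_le_pow_general (m : ℕ) (hm : 2 ≤ m)
    (β : ℝ) (hβ₁ : (2 : ℝ) ^ (1 / (m : ℝ)) < β)
    (x : ℝ) (k : ℕ) :
    Nk β x (k * m) ≤ (2 ^ m - 1) ^ k := by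
  obtain ⟨hβ, hβm⟩ := two_lt_pow_of_rpow_one_div_lt (by omega) hβ₁
  induction k with
  | zero => rw [zero_mul, pow_zero]; exact Set.ncard_le_one_of_subsingleton _
  | succ k ih =>
    calc Nk β x ((k + 1) * m) = Nk β x (k * m + m) := by rw [add_one_mul]
      _ ≤ Nk β x (k * m) * (2 ^ m - 1) := Nk_add_le hβ hβm
      _ ≤ (2 ^ m - 1) ^ k * (2 ^ m - 1) := Nat.mul_le_mul_right _ ih
      _ = (2 ^ m - 1) ^ (k + 1) := (pow_succ _ _).symm

theorem Nk_le_pow (m : ℕ) (hm : 2 ≤ m)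
    (β : ℝ) (hβ₁ : (2 : ℝ) ^ (1 / (m : ℝ)) < β) (hβ₂ : β < 2)
    (x : ℝ) (hx : x ∈ Set.Ioo 0 (1 / (β - 1))) (k : ℕ) (hk : 0 < k) :
    Nk β x (k * m) ≤ (2 ^ m - 1) ^ k :=
  Nk_le_pow_general m hm β hβ₁ x k
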